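/- arXiv:1912.02159 — 5 statements merged into one kernel-verified Lean document; each statement's English description precedes it below -/
import Mathlib

section
/- For every s ∈ ℂ with |Im(s)| < T and every z ∈ ℂ with Re(z) > 1, the series Σ_n |s − iμ_n|^{−Re(z)} converges; in particular Σ_n (s − iμ_n)^{−z} converges absolutely. -/
/-!
Split the `μ n` into dyadic bands `2 ^ k * T ≤ μ n < 2 ^ (k + 1) * T`. On the `k`-th band,
`μ ^ (-a) ≤ e * (2 ^ k * T) ^ (-a) * exp (-μ * t_k)` with `t_k = (2 ^ (k + 1) * T)⁻¹`, so
`∑ μ n ^ (-a) ≤ e * ∑ₖ (2 ^ k * T) ^ (-a) * V t_k`, and `V t_k = O(2 ^ k)` makes the right-hand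
side a geometric series of ratio `2 ^ (1 - a) < 1`. Both series of the theorem are dominated by
this one, because `‖s - I * μ‖ ≥ (1 - |s.im| / T) * μ` and
`‖w ^ (-z)‖ ≤ ‖w‖ ^ (-z.re) * exp (π * |z.im|)`.
-/

open Real Set

lemma exists_two_pow_mul_le_lt {T x : ℝ} (hT : 0 < T) (hx : T ≤ x) :
    ∃ k : ℕ, 2 ^ k * T ≤ x ∧ x < 2 * (2 ^ k * T) := by
  obtain ⟨k, hk, hk'⟩ := exists_nat_pow_near ((one_le_div hT).2 hx) one_lt_two
  refine ⟨k, (le_div_iff₀ hT).1 hk, ?_⟩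
  rw [← mul_assoc, ← pow_succ']
  exact (div_lt_iff₀ hT).1 hk'

lemma rpow_neg_le_exp_one_mul {a b x : ℝ} (ha : 0 ≤ a) (hb : 0 < b) (hbx : b ≤ x)
    (hx : x ≤ 2 * b) : x ^ (-a) ≤ exp 1 * (b ^ (-a) * exp (-x * (2 * b)⁻¹)) := by
  have hexp : 1 ≤ exp 1 * exp (-x * (2 * b)⁻¹) := by
    rw [← exp_add, neg_mul, ← sub_eq_add_neg, one_le_exp_iff, sub_nonneg, ← div_eq_mul_inv]
    exact (div_le_one (by positivity)).2 hx
  calc x ^ (-a) ≤ b ^ (-a) := rpow_le_rpow_of_nonpos hb hbx (neg_nonpos.2 ha)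
    _ ≤ b ^ (-a) * (exp 1 * exp (-x * (2 * b)⁻¹)) := le_mul_of_one_le_right (by positivity) hexp
    _ = exp 1 * (b ^ (-a) * exp (-x * (2 * b)⁻¹)) := by ring

lemma summable_two_pow_mul_rpow_neg_mul {T a : ℝ} (hT : 0 < T) (ha : 1 < a) :
    Summable fun k : ℕ => (2 ^ k * T) ^ (-a) * (1 + 2 * (2 ^ k * T)) := by
  have h0 : 0 ≤ (2 : ℝ) ^ (-a) := by positivity
  have hr : (2 : ℝ) ^ (-a) * 2 < 1 := by
    rw [← rpow_add_one two_ne_zero]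
    exact rpow_lt_one_of_one_lt_of_neg one_lt_two (by linarith)
  have hsum := ((summable_geometric_of_lt_one h0 (by linarith)).add
    ((summable_geometric_of_lt_one (by positivity) hr).mul_left (2 * T))).mul_left (T ^ (-a))
  refine hsum.congr fun k => ?_
  rw [mul_rpow (by positivity) hT.le, ← rpow_pow_comm zero_le_two, mul_pow]
  ring

section ExpSum

variable {ι : Type*} {μ : ι → ℝ} {C : ℝ}

lemma tsum_exp_neg_mul_le_mul_one_add_inv (hμ : ∀ n, 0 ≤ μ n)
    (hV : ∀ t : ℝ, 0 < t → Summable fun n => exp (-(μ n) * t))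
    (hCV : ∀ t ∈ Ioc (0 : ℝ) 1, (∑' n, exp (-(μ n) * t)) ≤ C / t) {t : ℝ} (ht : 0 < t) :
    ∑' n, exp (-(μ n) * t) ≤ C * (1 + t⁻¹) := by
  have hV1 : ∑' n, exp (-(μ n) * 1) ≤ C := by simpa using hCV 1 ⟨one_pos, le_rfl⟩
  have hC : 0 ≤ C := (tsum_nonneg fun n => (exp_pos _).le).trans hV1
  have ht' : 0 < t⁻¹ := inv_pos.2 ht
  rcases le_or_gt t 1 with ht1 | ht1
  · calc ∑' n, exp (-(μ n) * t) ≤ C / t := hCV t ⟨ht, ht1⟩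
      _ ≤ C * (1 + t⁻¹) := by rw [div_eq_mul_inv]; nlinarith
  · calc ∑' n, exp (-(μ n) * t) ≤ ∑' n, exp (-(μ n) * 1) :=
          (hV t ht).tsum_le_tsum (fun n => exp_le_exp.2 (by nlinarith [hμ n])) (hV 1 one_pos)
      _ ≤ C * (1 + t⁻¹) := by nlinarith

theorem summable_rpow_neg_of_tsum_exp_le {T a : ℝ} (hT : 0 < T) (hμ : ∀ n, T ≤ μ n)
    (hV : ∀ t : ℝ, 0 < t → Summable fun n => exp (-(μ n) * t))
    (hCV : ∀ t ∈ Ioc (0 : ℝ) 1, (∑' n, exp (-(μ n) * t)) ≤ C / t) (ha : 1 < a) :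
    Summable fun n => μ n ^ (-a) := by
  let F : ℕ × ι → ℝ := fun p => (2 ^ p.1 * T) ^ (-a) * exp (-(μ p.2) * (2 * (2 ^ p.1 * T))⁻¹)
  have hF : 0 ≤ F := fun p => by positivity
  have hFsum : Summable F := by
    refine (summable_prod_of_nonneg hF).2 ⟨fun k =>
      (hV (2 * (2 ^ k * T))⁻¹ (by positivity)).mul_left ((2 ^ k * T) ^ (-a)), ?_⟩
    refine ((summable_two_pow_mul_rpow_neg_mul hT ha).mul_left C).of_nonneg_of_le
      (fun k => tsum_nonneg fun n => hF (k, n)) fun k => ?_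
    calc ∑' n, F (k, n) = (2 ^ k * T) ^ (-a) * ∑' n, exp (-(μ n) * (2 * (2 ^ k * T))⁻¹) :=
          (hV (2 * (2 ^ k * T))⁻¹ (by positivity)).tsum_mul_left ((2 ^ k * T) ^ (-a))
      _ ≤ (2 ^ k * T) ^ (-a) * (C * (1 + 2 * (2 ^ k * T))) := by
          gcongr
          simpa using tsum_exp_neg_mul_le_mul_one_add_inv (fun n => hT.le.trans (hμ n)) hV hCV
            (t := (2 * (2 ^ k * T))⁻¹) (by positivity)
      _ = C * ((2 ^ k * T) ^ (-a) * (1 + 2 * (2 ^ k * T))) := by ring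
  have hFswap := (summable_prod_of_nonneg (f := fun p : ι × ℕ => F p.swap)
    fun p => hF p.swap).1 hFsum.prod_symm
  refine (hFswap.2.mul_left (exp 1)).of_nonneg_of_le
    (fun n => rpow_nonneg (hT.le.trans (hμ n)) _) fun n => ?_
  obtain ⟨k, hk, hk'⟩ := exists_two_pow_mul_le_lt hT (hμ n)
  calc μ n ^ (-a) ≤ exp 1 * F (k, n) :=
        rpow_neg_le_exp_one_mul (by linarith) (by positivity) hk hk'.le
    _ ≤ exp 1 * ∑' j, F (j, n) := by
        gcongr
        exact (hFswap.1 n).le_tsum k fun j _ => hF (j, n)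

end ExpSum

lemma mul_le_norm_sub_I_mul {T x : ℝ} (hT : 0 < T) (hx : T ≤ x) (s : ℂ) :
    (1 - |s.im| / T) * x ≤ ‖s - Complex.I * x‖ := by
  have him : (s - Complex.I * x).im = s.im - x := by simp
  have hle : |s.im| ≤ |s.im| * (x / T) :=
    le_mul_of_one_le_right (abs_nonneg _) ((one_le_div hT).2 hx)
  calc (1 - |s.im| / T) * x = x - |s.im| * (x / T) := by ring
    _ ≤ |s.im - x| := by linarith [le_abs_self s.im, neg_le_abs (s.im - x)]
    _ = |(s - Complex.I * x).im| := by rw [him]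
    _ ≤ ‖s - Complex.I * x‖ := Complex.abs_im_le_norm _

lemma Complex.norm_cpow_le_rpow_mul_exp (w z : ℂ) :
    ‖w ^ z‖ ≤ ‖w‖ ^ z.re * Real.exp (π * |z.im|) := by
  refine (norm_cpow_le w z).trans ?_
  rw [div_eq_mul_inv, ← Real.exp_neg]
  gcongr
  calc -(arg w * z.im) ≤ |arg w * z.im| := neg_le_abs _
    _ = |arg w| * |z.im| := abs_mul _ _
    _ ≤ π * |z.im| := by gcongr; exact abs_arg_le_pi w

theorem spectral_zeta_summable_general (T : ℝ) (hT : 0 < T) (μ : ℕ → ℝ) (hμ : ∀ n, T ≤ μ n)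
    (hV : ∀ t : ℝ, 0 < t → Summable fun n => Real.exp (-(μ n) * t))
    (C : ℝ)
    (hCV : ∀ t ∈ Ioc (0 : ℝ) 1, (∑' n, Real.exp (-(μ n) * t)) ≤ C / t)
    (s : ℂ) (hs : |s.im| < T) (z : ℂ) (hz : 1 < z.re) :
    Summable (fun n => ‖s - Complex.I * μ n‖ ^ (-z.re)) ∧
    Summable (fun n => ‖(s - Complex.I * μ n) ^ (-z)‖) := by
  have hδ : 0 < 1 - |s.im| / T := sub_pos.2 ((div_lt_one hT).2 hs)
  have hnorm : Summable fun n => ‖s - Complex.I * μ n‖ ^ (-z.re) := by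
    refine ((summable_rpow_neg_of_tsum_exp_le hT hμ hV hCV hz).mul_left
      ((1 - |s.im| / T) ^ (-z.re))).of_nonneg_of_le (fun n => by positivity) fun n => ?_
    rw [← mul_rpow hδ.le (hT.le.trans (hμ n))]
    exact rpow_le_rpow_of_nonpos (mul_pos hδ (hT.trans_le (hμ n)))
      (mul_le_norm_sub_I_mul hT (hμ n) s) (by linarith)
  refine ⟨hnorm, (hnorm.mul_right (Real.exp (π * |z.im|))).of_nonneg_of_le
    (fun n => norm_nonneg _) fun n => ?_⟩
  simpa using Complex.norm_cpow_le_rpow_mul_exp (s - Complex.I * μ n) (-z)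

/-- Absolute convergence of the Hurwitz-type spectral zeta series
`Σ_n (s - iμ_n)^(-z)` for `|Im s| < T` and `Re z > 1`. -/
theorem spectral_zeta_summable (T : ℝ) (hT : 0 < T) (μ : ℕ → ℝ) (hμ : ∀ n, T ≤ μ n)
    (hV : ∀ t : ℝ, 0 < t → Summable fun n => Real.exp (-(μ n) * t))
    (C : ℝ) (hC : 0 < C)
    (hCV : ∀ t ∈ Ioc (0 : ℝ) 1, (∑' n, Real.exp (-(μ n) * t)) ≤ C / t)
    (s : ℂ) (hs : |s.im| < T) (z : ℂ) (hz : 1 < z.re) :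
    Summable (fun n => ‖s - Complex.I * μ n‖ ^ (-z.re)) ∧
    Summable (fun n => ‖(s - Complex.I * μ n) ^ (-z)‖) :=
  spectral_zeta_summable_general T hT μ hμ hV C hCV s hs z hz
end

section
/- For every s ∈ ℂ with |Im(s)| < T and every z ∈ ℂ with Re(z) > 1, the integral ∫₀^∞ V(t)·e^{−ist}·t^{z−1} dt converges absolutely and equals Γ(z)·e^{−iπz/2}·Σ_n (s − iμ_n)^{−z}. -/
/-!
Write `V(t) e^{-ist} = ∑ₙ e^{-(μₙ + is)t}`. Each term has Mellin transform
`Γ(z) (μₙ + is)^{-z}`: the complex Gamma integral `∫₀^∞ t^{z-1} e^{-wt} dt = Γ(z) w^{-z}` holds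
for real `w > 0` and extends to `Re w > 0` by the identity theorem, and `μₙ + is = i (s - iμₙ)`
with `Re(μₙ + is) > 0` turns `(μₙ + is)^{-z}` into `e^{-iπz/2} (s - iμₙ)^{-z}`. All terms share
the phase `e^{-ist}`, so their moduli sum to `V(t) e^{t Im s} t^{Re z - 1}`; this is integrable
because `V(t) ≤ C/t` near `0` and `V(t) = O(e^{-Tt})` at infinity, so dominated convergence
allows termwise integration.
-/

open MeasureTheory Set Filter Topology Complex
open scoped Real

theorem integrableOn_rpow_mul_exp_neg_mul {s b : ℝ} (hs : -1 < s) (hb : 0 < b) :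
    IntegrableOn (fun t : ℝ => t ^ s * rexp (-b * t)) (Ioi 0) := by
  simpa using integrableOn_rpow_mul_exp_neg_mul_rpow hs one_pos hb

theorem norm_ofReal_cpow_mul_cexp {y w : ℂ} {t : ℝ} (ht : 0 < t) :
    ‖(t : ℂ) ^ y * cexp (-(w * t))‖ = t ^ y.re * rexp (-w.re * t) := by
  simp [norm_cpow_eq_rpow_re_of_pos ht, norm_exp]

theorem integrableOn_cpow_mul_cexp_neg_mul {y w : ℂ} (hy : -1 < y.re) (hw : 0 < w.re) :
    IntegrableOn (fun t : ℝ => (t : ℂ) ^ y * cexp (-(w * t))) (Ioi 0) := by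
  refine (integrableOn_rpow_mul_exp_neg_mul hy hw).mono' (by fun_prop) ?_
  filter_upwards [ae_restrict_mem measurableSet_Ioi] with t ht
  exact (norm_ofReal_cpow_mul_cexp ht).le

theorem differentiableOn_integral_cpow_mul_cexp_neg_mul {z : ℂ} (hz : 0 < z.re) :
    DifferentiableOn ℂ
      (fun w : ℂ => ∫ t in Ioi (0 : ℝ), (t : ℂ) ^ (z - 1) * cexp (-(w * t))) {w | 0 < w.re} := by
  intro w₀ (hw₀ : 0 < w₀.re)
  have hball : ∀ w ∈ Metric.ball w₀ (w₀.re / 2), w₀.re / 2 < w.re := fun w hw => by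
    have := (abs_re_le_norm (w - w₀)).trans_lt (mem_ball_iff_norm.mp hw)
    rw [sub_re, abs_lt] at this
    linarith
  have hderiv := hasDerivAt_integral_of_dominated_loc_of_deriv_le
    (μ := volume.restrict (Ioi 0))
    (F := fun w (t : ℝ) => (t : ℂ) ^ (z - 1) * cexp (-(w * t)))
    (F' := fun w (t : ℝ) => (t : ℂ) ^ (z - 1) * cexp (-(w * t)) * -t)
    (bound := fun t : ℝ => t ^ z.re * rexp (-(w₀.re / 2) * t))
    (Metric.ball_mem_nhds w₀ (half_pos hw₀)) (.of_forall fun w => by fun_prop)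
    (integrableOn_cpow_mul_cexp_neg_mul (by rw [sub_re, one_re]; linarith) hw₀) (by fun_prop) ?_
    (integrableOn_rpow_mul_exp_neg_mul (by linarith) (half_pos hw₀)) ?_
  · exact hderiv.2.differentiableAt.differentiableWithinAt
  · filter_upwards [ae_restrict_mem measurableSet_Ioi] with t (ht : 0 < t) w hw
    rw [norm_mul, norm_ofReal_cpow_mul_cexp ht, norm_neg, norm_real, Real.norm_of_nonneg ht.le,
      sub_re, one_re, mul_right_comm, ← Real.rpow_add_one ht.ne', sub_add_cancel]
    gcongr
    nlinarith [hball w hw]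
  · refine .of_forall fun t w _ => ?_
    have := (((hasDerivAt_id w).mul_const (t : ℂ)).neg.cexp).const_mul ((t : ℂ) ^ (z - 1))
    simpa [mul_assoc] using this

theorem integral_cpow_mul_cexp_neg_mul_Ioi {z w : ℂ} (hz : 0 < z.re) (hw : 0 < w.re) :
    ∫ t in Ioi (0 : ℝ), (t : ℂ) ^ (z - 1) * cexp (-(w * t)) = Gamma z * w ^ (-z) := by
  have hU : IsOpen {w : ℂ | 0 < w.re} := isOpen_lt continuous_const continuous_re
  have hf := (differentiableOn_integral_cpow_mul_cexp_neg_mul hz).analyticOnNhd hU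
  have hg : AnalyticOnNhd ℂ (fun w : ℂ => Gamma z * w ^ (-z)) {w | 0 < w.re} :=
    DifferentiableOn.analyticOnNhd (fun w (hw : 0 < w.re) =>
      ((differentiableAt_id.cpow_const (.inl hw)).const_mul _).differentiableWithinAt) hU
  refine hf.eqOn_of_preconnected_of_frequently_eq hg (convex_halfSpace_re_gt 0).isPreconnected
    (z₀ := 1) (by simp) ?_ hw
  have hreal : Tendsto ((↑) : ℝ → ℂ) (𝓝[≠] 1) (𝓝[≠] 1) := by
    rw [tendsto_nhdsWithin_iff]
    exact ⟨tendsto_nhdsWithin_of_tendsto_nhds continuous_ofReal.continuousAt,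
      eventually_nhdsWithin_iff.mpr (.of_forall fun r hr => ofReal_ne_one.mpr hr)⟩
  refine hreal.frequently (((eventually_gt_nhds one_pos).filter_mono
    nhdsWithin_le_nhds).mono fun r (hr : 0 < r) => ?_).frequently
  have harg : (r : ℂ).arg ≠ π := by simp [arg_ofReal_of_nonneg hr.le, Real.pi_ne_zero.symm]
  rw [integral_cpow_mul_exp_neg_mul_Ioi hz hr, one_div, inv_cpow _ _ harg, ← cpow_neg, mul_comm]

theorem cpow_neg_eq_cexp_mul_cpow_neg_I_mul {w : ℂ} (hw : 0 < w.re) (z : ℂ) :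
    w ^ (-z) = cexp (-(π * I * z) / 2) * (-I * w) ^ (-z) := by
  have hw0 : w ≠ 0 := fun h => by simp [h] at hw
  have harg : |w.arg| < π / 2 := abs_arg_lt_pi_div_two_iff.mpr (.inl hw)
  rw [abs_lt] at harg
  have hlog : log (-I * w) = log (-I) + log w :=
    log_mul (neg_ne_zero.mpr I_ne_zero) hw0 (by rw [arg_neg_I]; constructor <;> linarith)
  rw [cpow_def_of_ne_zero (mul_ne_zero (neg_ne_zero.mpr I_ne_zero) hw0),
    cpow_def_of_ne_zero hw0, hlog, log_neg_I, ← Complex.exp_add]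
  ring_nf

theorem integral_exp_smul_cexp_mul_cpow {m : ℝ} {s z : ℂ} (hm : s.im < m) (hz : 0 < z.re) :
    ∫ t in Ioi (0 : ℝ), rexp (-m * t) • (cexp (-I * s * t) * (t : ℂ) ^ (z - 1))
      = Gamma z * cexp (-(π * I * z) / 2) * (s - I * m) ^ (-z) := by
  have hw : 0 < (m + I * s).re := by simpa using hm
  have hrot : -I * (m + I * s) = s - I * m := by linear_combination (-s) * I_sq
  calc ∫ t in Ioi (0 : ℝ), rexp (-m * t) • (cexp (-I * s * t) * (t : ℂ) ^ (z - 1))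
      = ∫ t in Ioi (0 : ℝ), (t : ℂ) ^ (z - 1) * cexp (-((m + I * s) * t)) := by
        refine integral_congr_ae (.of_forall fun t => ?_)
        dsimp only
        rw [real_smul, ofReal_exp, ← mul_assoc, ← Complex.exp_add, mul_comm]
        push_cast
        ring_nf
    _ = Gamma z * cexp (-(π * I * z) / 2) * (s - I * m) ^ (-z) := by
        rw [integral_cpow_mul_cexp_neg_mul_Ioi hz hw, cpow_neg_eq_cexp_mul_cpow_neg_I_mul hw, hrot,
          ← mul_assoc]

theorem hasSum_integral_smul_of_hasSum {α ι E : Type*} [MeasurableSpace α] {μ : Measure α}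
    [Countable ι] [NormedAddCommGroup E] [NormedSpace ℝ E] {c : ι → α → ℝ} {v : α → ℝ}
    {g : α → E} (hc : ∀ n x, 0 ≤ c n x) (hcv : ∀ᵐ x ∂μ, HasSum (fun n => c n x) (v x))
    (hmeas : ∀ n, AEStronglyMeasurable (fun x => c n x • g x) μ)
    (hint : Integrable (fun x => v x • g x) μ) :
    HasSum (fun n => ∫ x, c n x • g x ∂μ) (∫ x, v x • g x ∂μ) := by
  refine hasSum_integral_of_dominated_convergence (fun n x => c n x * ‖g x‖) hmeas
    (fun n => .of_forall fun x => by rw [norm_smul, Real.norm_of_nonneg (hc n x)])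
    (hcv.mono fun x hx => (hx.mul_right _).summable) (hint.norm.congr ?_)
    (hcv.mono fun x hx => hx.smul_const _)
  filter_upwards [hcv] with x hx
  rw [(hx.mul_right _).tsum_eq, norm_smul, Real.norm_of_nonneg (hx.nonneg (hc · x))]

theorem norm_ofReal_mul_cexp_mul_cpow (V : ℝ) (s z : ℂ) {t : ℝ} (ht : 0 < t) :
    ‖(V : ℂ) * cexp (-I * s * t) * (t : ℂ) ^ (z - 1)‖
      = ‖V‖ * (rexp (s.im * t) * t ^ (z.re - 1)) := by
  simp [norm_exp, norm_cpow_eq_rpow_re_of_pos ht, mul_assoc]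

theorem integrableOn_ofReal_mul_cexp_mul_cpow {V : ℝ → ℝ} {C K T : ℝ} {s z : ℂ}
    (hV : AEStronglyMeasurable V (volume.restrict (Ioi 0)))
    (hV₀ : ∀ t ∈ Ioc 0 1, ‖V t‖ ≤ C / t)
    (hV₁ : ∀ t ∈ Ioi 1, ‖V t‖ ≤ K * rexp (-(T * t)))
    (hs : s.im < T) (hz : 1 < z.re) :
    IntegrableOn (fun t : ℝ => (V t : ℂ) * cexp (-I * s * t) * (t : ℂ) ^ (z - 1)) (Ioi 0) := by
  have hmeas : AEStronglyMeasurable (fun t : ℝ => (V t : ℂ) * cexp (-I * s * t) * (t : ℂ) ^ (z - 1))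
      (volume.restrict (Ioi 0)) :=
    ((continuous_ofReal.comp_aestronglyMeasurable hV).mul (Measurable.aestronglyMeasurable
      (by fun_prop))).mul (Measurable.aestronglyMeasurable (by fun_prop))
  rw [← Ioc_union_Ioi_eq_Ioi zero_le_one, integrableOn_union]
  constructor
  · have hpow : IntegrableOn (fun t : ℝ => t ^ (z.re - 2)) (Ioc 0 1) :=
      (intervalIntegrable_iff_integrableOn_Ioc_of_le zero_le_one).mp
        (intervalIntegral.intervalIntegrable_rpow' (by linarith))
    refine (hpow.const_mul (C * rexp |s.im|)).mono' (hmeas.mono_set Ioc_subset_Ioi_self) ?_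
    filter_upwards [ae_restrict_mem measurableSet_Ioc] with t ⟨ht₀, ht₁⟩
    rw [norm_ofReal_mul_cexp_mul_cpow _ _ _ ht₀]
    have hexp : rexp (s.im * t) ≤ rexp |s.im| := by
      gcongr; nlinarith [le_abs_self s.im, abs_nonneg s.im]
    calc ‖V t‖ * (rexp (s.im * t) * t ^ (z.re - 1))
        ≤ C / t * (rexp |s.im| * t ^ (z.re - 1)) :=
          mul_le_mul (hV₀ t ⟨ht₀, ht₁⟩) (by gcongr) (by positivity)
            ((norm_nonneg _).trans (hV₀ t ⟨ht₀, ht₁⟩))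
      _ = C * rexp |s.im| * t ^ (z.re - 2) := by
        rw [show z.re - 1 = z.re - 2 + 1 by ring, Real.rpow_add_one ht₀.ne']
        field_simp
  · have hdecay := (integrableOn_rpow_mul_exp_neg_mul (by linarith : -1 < z.re - 1)
      (sub_pos.mpr hs)).mono_set (Ioi_subset_Ioi zero_le_one)
    refine (hdecay.const_mul K).mono' (hmeas.mono_set (Ioi_subset_Ioi zero_le_one)) ?_
    filter_upwards [ae_restrict_mem measurableSet_Ioi] with t ht
    have ht₀ : 0 < t := zero_lt_one.trans ht
    rw [norm_ofReal_mul_cexp_mul_cpow _ _ _ ht₀]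
    calc ‖V t‖ * (rexp (s.im * t) * t ^ (z.re - 1))
        ≤ K * rexp (-(T * t)) * (rexp (s.im * t) * t ^ (z.re - 1)) :=
          mul_le_mul_of_nonneg_right (hV₁ t ht)
            (mul_nonneg (Real.exp_pos _).le (Real.rpow_nonneg ht₀.le _))
      _ = K * (t ^ (z.re - 1) * rexp (-(T - s.im) * t)) := by
        rw [show -(T - s.im) * t = -(T * t) + s.im * t by ring, Real.exp_add]
        ring

theorem tsum_exp_neg_mul_le {μ : ℕ → ℝ} {T t₀ t : ℝ} (hμ : ∀ n, T ≤ μ n)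
    (hsum : Summable fun n => rexp (-(μ n) * t₀)) (ht : t₀ ≤ t) :
    ∑' n, rexp (-(μ n) * t)
      ≤ (∑' n, rexp (-(μ n) * t₀)) * rexp (T * t₀) * rexp (-(T * t)) := by
  have hle (n : ℕ) :
      rexp (-(μ n) * t) ≤ rexp (-(μ n) * t₀) * (rexp (T * t₀) * rexp (-(T * t))) := by
    rw [← Real.exp_add, ← Real.exp_add]
    gcongr
    nlinarith [mul_le_mul_of_nonneg_right (hμ n) (sub_nonneg.mpr ht)]
  rw [mul_assoc, ← tsum_mul_right]
  exact Summable.tsum_le_tsum hle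
    (Summable.of_nonneg_of_le (fun n => (Real.exp_pos _).le) hle (hsum.mul_right _))
    (hsum.mul_right _)

theorem mellin_transform_spectral_series_general (T : ℝ) (μ : ℕ → ℝ)
    (hμ : ∀ n, T ≤ μ n)
    (hV : ∀ t : ℝ, 0 < t → Summable fun n => Real.exp (-(μ n) * t))
    (C : ℝ)
    (hCV : ∀ t ∈ Ioc (0 : ℝ) 1, (∑' n, Real.exp (-(μ n) * t)) ≤ C / t)
    (s : ℂ) (hs : |s.im| < T) (z : ℂ) (hz : 1 < z.re) :
    IntegrableOn (fun t : ℝ => ((∑' n, Real.exp (-(μ n) * t) : ℝ) : ℂ) *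
        Complex.exp (-Complex.I * s * t) * (t : ℂ) ^ (z - 1)) (Ioi 0) ∧
    ∫ t in Ioi (0 : ℝ), ((∑' n, Real.exp (-(μ n) * t) : ℝ) : ℂ) *
        Complex.exp (-Complex.I * s * t) * (t : ℂ) ^ (z - 1)
      = Complex.Gamma z * Complex.exp (-(Real.pi * Complex.I * z) / 2) *
          ∑' n, (s - Complex.I * μ n) ^ (-z) := by
  have hVnonneg (t : ℝ) : 0 ≤ ∑' n, rexp (-(μ n) * t) :=
    tsum_nonneg fun n => (Real.exp_pos _).le
  have hint := integrableOn_ofReal_mul_cexp_mul_cpow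
    (Measurable.tsum fun n => by fun_prop).aestronglyMeasurable
    (fun t ht => (Real.norm_of_nonneg (hVnonneg t)).trans_le (hCV t ht))
    (fun t ht => (Real.norm_of_nonneg (hVnonneg t)).trans_le
      (tsum_exp_neg_mul_le hμ (hV 1 one_pos) (le_of_lt ht)))
    (abs_lt.mp hs).2 hz
  refine ⟨hint, ?_⟩
  have hsum := hasSum_integral_smul_of_hasSum (μ := volume.restrict (Ioi 0))
    (g := fun t : ℝ => cexp (-I * s * t) * (t : ℂ) ^ (z - 1)) (fun n t => (Real.exp_pos _).le)
    (ae_restrict_of_forall_mem measurableSet_Ioi fun t ht => (hV t ht).hasSum)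
    (fun n => Measurable.aestronglyMeasurable (by fun_prop))
    (by simpa only [IntegrableOn, real_smul, mul_assoc] using hint)
  have hterm n := integral_exp_smul_cexp_mul_cpow ((abs_lt.mp hs).2.trans_le (hμ n))
    (zero_lt_one.trans hz)
  simp only [real_smul, ← mul_assoc] at hsum hterm
  rw [← hsum.tsum_eq, tsum_congr hterm, tsum_mul_left]

/-- Mellin-transform representation of the spectral series: for `|Im s| < T` and `Re z > 1`,
`∫₀^∞ V(t)·e^(-ist)·t^(z-1) dt` converges absolutely and equals
`Γ(z)·e^(-iπz/2)·Σ_n (s - iμ_n)^(-z)`, where `V(t) = Σ_n e^(-μ_n t)`. -/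
theorem mellin_transform_spectral_series (T : ℝ) (hT : 0 < T) (μ : ℕ → ℝ)
    (hμ : ∀ n, T ≤ μ n)
    (hV : ∀ t : ℝ, 0 < t → Summable fun n => Real.exp (-(μ n) * t))
    (C : ℝ) (hC : 0 < C)
    (hCV : ∀ t ∈ Ioc (0 : ℝ) 1, (∑' n, Real.exp (-(μ n) * t)) ≤ C / t)
    (s : ℂ) (hs : |s.im| < T) (z : ℂ) (hz : 1 < z.re) :
    IntegrableOn (fun t : ℝ => ((∑' n, Real.exp (-(μ n) * t) : ℝ) : ℂ) *
        Complex.exp (-Complex.I * s * t) * (t : ℂ) ^ (z - 1)) (Ioi 0) ∧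
    ∫ t in Ioi (0 : ℝ), ((∑' n, Real.exp (-(μ n) * t) : ℝ) : ℂ) *
        Complex.exp (-Complex.I * s * t) * (t : ℂ) ^ (z - 1)
      = Complex.Gamma z * Complex.exp (-(Real.pi * Complex.I * z) / 2) *
          ∑' n, (s - Complex.I * μ n) ^ (-z) :=
  mellin_transform_spectral_series_general T μ hμ hV C hCV s hs z hz
end

section
/- Suppose (λ_n)_{n∈ℕ} are real numbers with inf_n λ_n > 0, such that θ(t) := Σ_n e^{−λ_n t} converges for every t > 0 and there is a real sequence (a_k)_{k≥0} such that for every N ∈ ℕ, θ(t) = t^{−1/2}·(a₀ + a₁t + ⋯ + a_N t^N) + O(t^{N+1/2}) as t → 0+. Then the Dirichlet series Σ_n λ_n^{−s} converges absolutely for Re(s) > 1/2, and there exists a meromorphic function Z on ℂ with Z(s) = Σ_n λ_n^{−s} for Re(s) > 1/2, such that Z is analytic at every point of ℂ outside {1/2 − n : n ∈ ℕ} and has at most a simple pole at each point s = 1/2 − n, with residue a_n/Γ(1/2 − n). -/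
/-!
Mellin transform of the heat trace: for `Re s > 1/2`,
`∫₀^∞ t^(s-1) θ(t) dt = Γ(s) ∑ₙ λₙ^(-s)`, and finiteness of the left side for real `s` gives
absolute convergence. Subtracting the terms `aₖ t^(k-1/2)` of the small-time expansion, cut off
at `t = 1`, leaves a remainder that is `O(t^(N+1/2))` at `0` and exponentially small at `∞`, so
its Mellin transform is holomorphic on `Re s > -N - 1/2`; the cut-off terms contribute
`aₖ / (s - (1/2 - k))`. Dividing by `Γ` gives the continuation of the zeta function, with residue
`aₙ / Γ(1/2 - n)` at `1/2 - n`.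
-/

open Topology Filter Asymptotics Set MeasureTheory

noncomputable section

namespace MellinExpansion

structure HasAsymptoticExpansion (f : ℝ → ℂ) (c : ℕ → ℂ) (r : ℝ) : Prop where
  locallyIntegrableOn : LocallyIntegrableOn f (Ioi 0)
  exists_isBigO_exp_atTop : ∃ ε > 0, f =O[atTop] fun t => Real.exp (-ε * t)
  isBigO_nhdsGT : ∀ N : ℕ,
    (fun t : ℝ => f t - ∑ k ∈ Finset.range (N + 1), c k * (t : ℂ) ^ ((k : ℂ) - r))
      =O[𝓝[>] 0] fun t => t ^ ((N : ℝ) + 1 - r)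

def cutoffPow (r : ℝ) (k : ℕ) : ℝ → ℂ :=
  indicator (Ioc 0 1) fun t => (t : ℂ) ^ ((k : ℂ) - r)

def remainder (f : ℝ → ℂ) (c : ℕ → ℂ) (r : ℝ) (N : ℕ) (t : ℝ) : ℂ :=
  f t - ∑ k ∈ Finset.range (N + 1), c k * cutoffPow r k t

def continuation (f : ℝ → ℂ) (c : ℕ → ℂ) (r : ℝ) (N : ℕ) (s : ℂ) : ℂ :=
  mellin (remainder f c r N) s + ∑ k ∈ Finset.range (N + 1), c k * (s - (r - k))⁻¹

/-- `⌈r - s.re⌉₊` is just some `N` with `r - N - 1 < s.re`; all such `N` give the same value. -/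
def mellinExt (f : ℝ → ℂ) (c : ℕ → ℂ) (r : ℝ) (s : ℂ) : ℂ :=
  continuation f c r ⌈r - s.re⌉₊ s

variable {f : ℝ → ℂ} {c : ℕ → ℂ} {r : ℝ} {s : ℂ}

lemma hasMellin_cutoffPow (k : ℕ) (hs : r - k < s.re) :
    HasMellin (cutoffPow r k) s (s - (r - k))⁻¹ := by
  have h := hasMellin_cpow_Ioc ((k : ℂ) - r) (s := s) (by simp; linarith)
  rwa [one_div, show s + ((k : ℂ) - r) = s - (r - k) by ring] at h

lemma integrableOn_cutoffPow (r : ℝ) (k : ℕ) {K : Set ℝ} (hK : K ⊆ Ioi 0)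
    (hKc : IsCompact K) :
    IntegrableOn (cutoffPow r k) K := by
  refine IntegrableOn.indicator (ContinuousOn.integrableOn_compact hKc fun t ht => ?_)
    measurableSet_Ioc
  exact (Complex.continuousAt_ofReal_cpow_const _ _ (Or.inr (hK ht).ne')).continuousWithinAt

lemma hasMellin_sub_const_mul_cutoffPow {g : ℝ → ℂ} (hg : MellinConvergent g s) (a : ℂ) {k : ℕ}
    (hs : r - k < s.re) :
    HasMellin (fun t => g t - a * cutoffPow r k t) s (mellin g s - a * (s - (r - k))⁻¹) := by
  have hk := hasMellin_cutoffPow k hs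
  have h := hasMellin_sub hg (hk.1.const_smul a)
  rw [mellin_const_smul, hk.2] at h
  simpa only [smul_eq_mul] using h

namespace HasAsymptoticExpansion

variable (hf : HasAsymptoticExpansion f c r)
include hf

lemma remainder_isBigO_nhdsGT (N : ℕ) :
    remainder f c r N =O[𝓝[>] 0] (· ^ (-(r - N - 1))) := by
  refine (hf.isBigO_nhdsGT N).congr' ?_ (.of_eq <| funext fun t => by ring_nf)
  filter_upwards [Ioc_mem_nhdsGT_of_mem (left_mem_Ico.2 one_pos)] with t ht
  simp [remainder, cutoffPow, indicator_of_mem ht]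

lemma remainder_isBigO_atTop (N : ℕ) :
    ∃ ε > 0, remainder f c r N =O[atTop] fun t => Real.exp (-ε * t) := by
  obtain ⟨ε, hε, h⟩ := hf.exists_isBigO_exp_atTop
  refine ⟨ε, hε, h.congr' ?_ .rfl⟩
  filter_upwards [eventually_gt_atTop 1] with t ht
  simp [remainder, cutoffPow, indicator_of_notMem (fun h : t ∈ Ioc 0 1 => h.2.not_gt ht)]

lemma locallyIntegrableOn_remainder (N : ℕ) :
    LocallyIntegrableOn (remainder f c r N) (Ioi 0) :=
  hf.locallyIntegrableOn.sub <| (locallyIntegrableOn_iff isOpen_Ioi.isLocallyClosed).2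
    fun _ hK hKc => integrable_finsetSum _ fun k _ =>
      (integrableOn_cutoffPow r k hK hKc).const_mul _

lemma mellinConvergent_remainder {N : ℕ} (hs : r - N - 1 < s.re) :
    MellinConvergent (remainder f c r N) s :=
  let ⟨_, hε, h⟩ := hf.remainder_isBigO_atTop N
  mellinConvergent_of_isBigO_rpow_exp hε (hf.locallyIntegrableOn_remainder N) h
    (hf.remainder_isBigO_nhdsGT N) hs

lemma analyticAt_mellin_remainder {N : ℕ} (hs : r - N - 1 < s.re) :
    AnalyticAt ℂ (mellin (remainder f c r N)) s := by
  obtain ⟨_, hε, h⟩ := hf.remainder_isBigO_atTop N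
  refine DifferentiableOn.analyticAt (s := {z : ℂ | r - N - 1 < z.re}) (fun z hz => ?_)
    ((isOpen_lt continuous_const Complex.continuous_re).mem_nhds hs)
  exact (mellin_differentiableAt_of_isBigO_rpow_exp hε (hf.locallyIntegrableOn_remainder N) h
    (hf.remainder_isBigO_nhdsGT N) hz).differentiableWithinAt

lemma mellin_remainder_succ {N : ℕ} (hs : r - N - 1 < s.re) :
    mellin (remainder f c r (N + 1)) s
      = mellin (remainder f c r N) s - c (N + 1) * (s - (r - (N + 1 : ℕ)))⁻¹ := by
  have h := hasMellin_sub_const_mul_cutoffPow (hf.mellinConvergent_remainder hs) (c (N + 1))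
    (r := r) (k := N + 1) (by push_cast; linarith)
  rw [← h.2]
  congr 1
  ext t
  simp only [remainder, Finset.sum_range_succ, sub_sub]

lemma continuation_succ {N : ℕ} (hs : r - N - 1 < s.re) :
    continuation f c r (N + 1) s = continuation f c r N s := by
  rw [continuation, continuation, hf.mellin_remainder_succ hs, Finset.sum_range_succ]
  ring

lemma continuation_eq_of_le {N M : ℕ} (hNM : N ≤ M) (hs : r - N - 1 < s.re) :
    continuation f c r M s = continuation f c r N s := by
  induction M, hNM using Nat.le_induction with
  | base => rfl
  | succ M hNM ih =>
    have hM : (N : ℝ) ≤ M := by exact_mod_cast hNM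
    rw [hf.continuation_succ (by linarith), ih]

lemma mellinExt_eq_continuation {N : ℕ} (hs : r - N - 1 < s.re) :
    mellinExt f c r s = continuation f c r N s := by
  have hceil : r - ⌈r - s.re⌉₊ - 1 < s.re := by linarith [Nat.le_ceil (r - s.re)]
  rcases le_total N ⌈r - s.re⌉₊ with h | h
  · exact hf.continuation_eq_of_le h hs
  · exact (hf.continuation_eq_of_le h hceil).symm

lemma mellinExt_eventuallyEq_continuation {N : ℕ} (hs : r - N - 1 < s.re) :
    mellinExt f c r =ᶠ[𝓝 s] continuation f c r N := by
  filter_upwards [(isOpen_lt continuous_const Complex.continuous_re).mem_nhds hs] with z hz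
  exact hf.mellinExt_eq_continuation hz

lemma mellinConvergent (hs : r < s.re) : MellinConvergent f s := by
  have h := (hasMellin_sub_const_mul_cutoffPow (hf.mellinConvergent_remainder (N := 0)
    (by push_cast; linarith)) (-c 0) (r := r) (k := 0) (by push_cast; linarith)).1
  convert h using 2 with t
  simp [remainder]

lemma mellinExt_eq_mellin (hs : r < s.re) : mellinExt f c r s = mellin f s := by
  have h := hasMellin_sub_const_mul_cutoffPow (hf.mellinConvergent hs) (c 0) (r := r) (k := 0)
    (by push_cast; linarith)
  rw [hf.mellinExt_eq_continuation (N := 0) (by push_cast; linarith), continuation,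
    Finset.sum_range_one]
  have : remainder f c r 0 = fun t => f t - c 0 * cutoffPow r 0 t := by
    ext t; simp [remainder]
  rw [this, h.2, sub_add_cancel]

lemma analyticAt_mellinExt (hs : ∀ k : ℕ, s ≠ r - k) : AnalyticAt ℂ (mellinExt f c r) s := by
  have hN : r - ⌈r - s.re⌉₊ - 1 < s.re := by linarith [Nat.le_ceil (r - s.re)]
  refine AnalyticAt.congr ?_ (hf.mellinExt_eventuallyEq_continuation hN).symm
  exact (hf.analyticAt_mellin_remainder hN).add <| Finset.analyticAt_fun_sum _ fun k _ =>
    analyticAt_const.mul <| (analyticAt_id.sub analyticAt_const).inv (sub_ne_zero.2 (hs k))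

lemma meromorphicOn_mellinExt : MeromorphicOn (mellinExt f c r) univ := by
  intro s _
  have hN : r - ⌈r - s.re⌉₊ - 1 < s.re := by linarith [Nat.le_ceil (r - s.re)]
  refine MeromorphicAt.congr ?_
    ((hf.mellinExt_eventuallyEq_continuation hN).symm.filter_mono nhdsWithin_le_nhds)
  exact (hf.analyticAt_mellin_remainder hN).meromorphicAt.add <|
    MeromorphicAt.fun_sum fun k _ =>
      analyticAt_const.meromorphicAt.mul (analyticAt_id.sub analyticAt_const).meromorphicAt.inv

lemma tendsto_sub_mul_mellinExt (n : ℕ) :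
    Tendsto (fun s => (s - (r - n)) * mellinExt f c r s) (𝓝[≠] ((r : ℂ) - n)) (𝓝 (c n)) := by
  have hp : r - n - 1 < ((r : ℂ) - n).re := by simp
  set h : ℂ → ℂ := fun s =>
    mellin (remainder f c r n) s + ∑ k ∈ Finset.range n, c k * (s - (r - k))⁻¹
  have hh : AnalyticAt ℂ h (r - n) := by
    refine (hf.analyticAt_mellin_remainder hp).add <| Finset.analyticAt_fun_sum _ fun k hk =>
      analyticAt_const.mul <| (analyticAt_id.sub analyticAt_const).inv <| sub_ne_zero.2 ?_
    exact fun heq => (Finset.mem_range.1 hk).ne' (by exact_mod_cast sub_right_injective heq)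
  have hlim : Tendsto (fun s => (s - (r - n)) * h s + c n) (𝓝 ((r : ℂ) - n)) (𝓝 (c n)) := by
    have hhc := hh.continuousAt
    simpa using (show ContinuousAt (fun s => (s - (r - n)) * h s + c n) ((r : ℂ) - n) by
      fun_prop).tendsto
  refine (hlim.mono_left nhdsWithin_le_nhds).congr' ?_
  filter_upwards [self_mem_nhdsWithin,
    nhdsWithin_le_nhds (hf.mellinExt_eventuallyEq_continuation hp)] with s hs hse
  rw [hse, continuation, Finset.sum_range_succ]
  have hs' : s - (r - n) ≠ 0 := sub_ne_zero.2 hs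
  simp only [h]
  field_simp
  ring

end HasAsymptoticExpansion

end MellinExpansion

namespace SpectralZeta

def heatTrace (lam : ℕ → ℝ) (t : ℝ) : ℂ := ((∑' n, Real.exp (-(lam n) * t) : ℝ) : ℂ)

variable {lam : ℕ → ℝ}

lemma continuousOn_heatTrace (hlam : ∀ n, 0 ≤ lam n)
    (hθ : ∀ t : ℝ, 0 < t → Summable fun n => Real.exp (-(lam n) * t)) :
    ContinuousOn (heatTrace lam) (Ioi 0) := by
  intro t ht
  have hc : ContinuousOn (fun x : ℝ => ∑' n, Real.exp (-(lam n) * x)) (Ici (t / 2)) :=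
    continuousOn_tsum (fun n => by fun_prop) (hθ _ (half_pos ht)) fun n x hx => by
      rw [Real.norm_eq_abs, Real.abs_exp, Real.exp_le_exp]
      nlinarith [hlam n, mem_Ici.1 hx]
  exact (Complex.continuous_ofReal.continuousAt.comp
    (hc.continuousAt (Ici_mem_nhds (half_lt_self ht)))).continuousWithinAt

lemma heatTrace_isBigO_atTop {ε : ℝ} (hlow : ∀ n, ε ≤ lam n)
    (hθ : ∀ t : ℝ, 0 < t → Summable fun n => Real.exp (-(lam n) * t)) :
    heatTrace lam =O[atTop] fun t => Real.exp (-ε * t) := by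
  -- `e^(-λ t) ≤ e^ε e^(-λ) e^(-ε t)` for `t ≥ 1`, as `(λ - ε)(t - 1) ≥ 0`
  refine isBigO_iff.2 ⟨Real.exp ε * ∑' n, Real.exp (-(lam n) * 1), ?_⟩
  filter_upwards [eventually_ge_atTop 1] with t ht
  rw [heatTrace, Complex.norm_real,
    Real.norm_of_nonneg (tsum_nonneg fun _ => (Real.exp_pos _).le),
    Real.norm_of_nonneg (Real.exp_pos _).le, mul_assoc, ← tsum_mul_right, ← tsum_mul_left]
  refine Summable.tsum_le_tsum (fun n => ?_) (hθ t (by linarith))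
    (((hθ 1 one_pos).mul_right _).mul_left _)
  rw [← Real.exp_add, ← Real.exp_add, Real.exp_le_exp]
  nlinarith [hlow n]

open MellinExpansion in
lemma hasAsymptoticExpansion_heatTrace {ε : ℝ} (hε : 0 < ε) (hlow : ∀ n, ε ≤ lam n)
    (hθ : ∀ t : ℝ, 0 < t → Summable fun n => Real.exp (-(lam n) * t)) (a : ℕ → ℝ)
    (hasymp : ∀ N : ℕ,
      (fun t : ℝ => (∑' n, Real.exp (-(lam n) * t)) -
          t ^ (-(1 / 2 : ℝ)) * ∑ k ∈ Finset.range (N + 1), a k * t ^ k)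
        =O[𝓝[>] (0 : ℝ)] fun t : ℝ => t ^ ((N : ℝ) + 1 / 2)) :
    HasAsymptoticExpansion (heatTrace lam) (fun k => a k) (1 / 2) where
  locallyIntegrableOn :=
    (continuousOn_heatTrace (fun n => hε.le.trans (hlow n)) hθ).locallyIntegrableOn
      measurableSet_Ioi
  exists_isBigO_exp_atTop := ⟨ε, hε, heatTrace_isBigO_atTop hlow hθ⟩
  isBigO_nhdsGT N := by
    refine (Complex.isBigO_ofReal_left.2 (hasymp N)).congr' ?_
      (.of_eq <| funext fun t => by ring_nf)
    filter_upwards [self_mem_nhdsWithin] with t (ht : 0 < t)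
    have hpow (k : ℕ) :
        (t : ℂ) ^ ((k : ℂ) - ((1 / 2 : ℝ) : ℂ)) = ((t ^ (-(1 / 2 : ℝ)) * t ^ k : ℝ) : ℂ) := by
      rw [← Real.rpow_natCast, ← Real.rpow_add ht, Complex.ofReal_cpow ht.le]
      push_cast
      ring_nf
    simp only [heatTrace, hpow]
    push_cast
    rw [Finset.mul_sum]
    congr 1
    exact Finset.sum_congr rfl fun k _ => by ring

lemma summable_rpow_neg_of_mellinConvergent (hlam : ∀ n, 0 < lam n)
    (hθ : ∀ t : ℝ, 0 < t → Summable fun n => Real.exp (-(lam n) * t)) {σ : ℝ} (hσ : 0 < σ)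
    (h : MellinConvergent (heatTrace lam) σ) : Summable fun n => lam n ^ (-σ) := by
  have hθσ : IntegrableOn (fun t => t ^ (σ - 1) * ∑' n, Real.exp (-(lam n) * t)) (Ioi 0) := by
    refine IntegrableOn.congr_fun (Integrable.norm h) (fun t (ht : 0 < t) => ?_)
      measurableSet_Ioi
    rw [norm_smul, Complex.norm_cpow_eq_rpow_re_of_pos ht, heatTrace, Complex.norm_real,
      Real.norm_of_nonneg (tsum_nonneg fun _ => (Real.exp_pos _).le)]
    simp
  have hterm (n : ℕ) :
      ∫ t in Ioi 0, t ^ (σ - 1) * Real.exp (-(lam n) * t) = Real.Gamma σ * lam n ^ (-σ) := by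
    simp_rw [neg_mul, Real.integral_rpow_mul_exp_neg_mul_Ioi hσ (hlam n), one_div,
      Real.inv_rpow (hlam n).le, Real.rpow_neg (hlam n).le, mul_comm]
  have hΓ : 0 < Real.Gamma σ := Real.Gamma_pos_of_pos hσ
  have hint (n : ℕ) : IntegrableOn (fun t => t ^ (σ - 1) * Real.exp (-(lam n) * t)) (Ioi 0) :=
    Integrable.of_integral_ne_zero <| by
      rw [hterm]; exact (mul_pos hΓ (Real.rpow_pos_of_pos (hlam n) _)).ne'
  refine summable_of_sum_le (c := (∫ t in Ioi 0, t ^ (σ - 1) * ∑' n, Real.exp (-(lam n) * t)) /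
    Real.Gamma σ) (fun n => (Real.rpow_pos_of_pos (hlam n) _).le) fun u => ?_
  rw [le_div_iff₀ hΓ, Finset.sum_mul]
  calc ∑ n ∈ u, lam n ^ (-σ) * Real.Gamma σ
      = ∫ t in Ioi 0, ∑ n ∈ u, t ^ (σ - 1) * Real.exp (-(lam n) * t) := by
        rw [integral_finsetSum _ fun n _ => hint n]
        exact Finset.sum_congr rfl fun n _ => by rw [hterm, mul_comm]
    _ ≤ ∫ t in Ioi 0, t ^ (σ - 1) * ∑' n, Real.exp (-(lam n) * t) := by
        refine setIntegral_mono_on (integrable_finsetSum _ fun n _ => hint n) hθσ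
          measurableSet_Ioi fun t (ht : 0 < t) => ?_
        rw [← Finset.mul_sum]
        gcongr
        exact (hθ t ht).sum_le_tsum u fun n _ => (Real.exp_pos _).le

lemma mellin_heatTrace (hlam : ∀ n, 0 < lam n)
    (hθ : ∀ t : ℝ, 0 < t → Summable fun n => Real.exp (-(lam n) * t)) {s : ℂ} (hs : 0 < s.re)
    (hsum : Summable fun n => lam n ^ (-s.re)) :
    mellin (heatTrace lam) s = Complex.Gamma s * ∑' n, (lam n : ℂ) ^ (-s) := by
  have hF (t : ℝ) (ht : t ∈ Ioi 0) :
      HasSum (fun n => (1 : ℂ) * Real.exp (-(lam n) * t)) (heatTrace lam t) := by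
    simpa [heatTrace] using (hθ t ht).hasSum.mapL Complex.ofRealCLM
  have hsum' : Summable fun n => ‖(1 : ℂ)‖ / lam n ^ s.re :=
    hsum.congr fun n => by rw [Real.rpow_neg (hlam n).le, norm_one, one_div]
  rw [← (hasSum_mellin (fun n => Or.inr (hlam n)) hs hF hsum').tsum_eq, ← tsum_mul_left]
  exact tsum_congr fun n => by rw [mul_one, Complex.cpow_neg, div_eq_mul_inv]

end SpectralZeta

end

open SpectralZeta MellinExpansion in
/-- From the heat-trace expansion `θ(t) = Σ_n e^(-λ_n t) ~ t^(-1/2)(a₀ + a₁t + ⋯)` with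
`inf_n λ_n > 0`, the spectral zeta function `Σ_n λ_n^(-s)` converges absolutely for
`Re s > 1/2` and extends to a meromorphic function on `ℂ` analytic outside
`{1/2 - n : n ∈ ℕ}`, with at most a simple pole at each `s = 1/2 - n`
of residue `a_n / Γ(1/2 - n)`. -/
theorem spectral_zeta_simple_poles (lam : ℕ → ℝ) (ε : ℝ) (hε : 0 < ε)
    (hlow : ∀ n, ε ≤ lam n)
    (hθ : ∀ t : ℝ, 0 < t → Summable fun n => Real.exp (-(lam n) * t))
    (a : ℕ → ℝ)
    (hasymp : ∀ N : ℕ,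
      (fun t : ℝ => (∑' n, Real.exp (-(lam n) * t)) -
          t ^ (-(1 / 2 : ℝ)) * ∑ k ∈ Finset.range (N + 1), a k * t ^ k)
        =O[𝓝[>] (0 : ℝ)] fun t : ℝ => t ^ ((N : ℝ) + 1 / 2)) :
    (∀ s : ℂ, 1 / 2 < s.re → Summable fun n => ‖((lam n : ℂ)) ^ (-s)‖) ∧
    ∃ Z : ℂ → ℂ, MeromorphicOn Z Set.univ ∧
      (∀ s : ℂ, 1 / 2 < s.re → Z s = ∑' n, (lam n : ℂ) ^ (-s)) ∧
      (∀ s : ℂ, (∀ n : ℕ, s ≠ 1 / 2 - n) → AnalyticAt ℂ Z s) ∧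
      (∀ n : ℕ, Tendsto (fun s => (s - (1 / 2 - (n : ℂ))) * Z s)
        (𝓝[≠] ((1 / 2 : ℂ) - n)) (𝓝 ((a n : ℂ) / Complex.Gamma (1 / 2 - n)))) := by
  have hlam (n : ℕ) : 0 < lam n := hε.trans_le (hlow n)
  have hf := hasAsymptoticExpansion_heatTrace hε hlow hθ a hasymp
  have hsum (s : ℂ) (hs : 1 / 2 < s.re) : Summable fun n => lam n ^ (-s.re) :=
    summable_rpow_neg_of_mellinConvergent hlam hθ (by linarith)
      (hf.mellinConvergent (by simpa using hs))
  have hr : ((1 / 2 : ℝ) : ℂ) = 1 / 2 := by norm_num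
  have hΓinv := Complex.differentiable_one_div_Gamma
  refine ⟨fun s hs => (hsum s hs).congr fun n => ?_,
    fun s => (Complex.Gamma s)⁻¹ * mellinExt (heatTrace lam) (fun k => a k) (1 / 2) s,
    fun s _ => (hΓinv.analyticAt s).meromorphicAt.mul (hf.meromorphicOn_mellinExt s trivial),
    fun s hs => ?_, fun s hs => ?_, fun n => ?_⟩
  · rw [Complex.norm_cpow_eq_rpow_re_of_pos (hlam n), Complex.neg_re]
  · dsimp only
    rw [hf.mellinExt_eq_mellin (by simpa using hs),
      mellin_heatTrace hlam hθ (by linarith) (hsum s hs),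
      inv_mul_cancel_left₀ (Complex.Gamma_ne_zero_of_re_pos (by linarith))]
  · exact (hΓinv.analyticAt s).mul (hf.analyticAt_mellinExt fun k => by rw [hr]; exact hs k)
  · have hres := hf.tendsto_sub_mul_mellinExt n
    rw [hr] at hres
    convert ((hΓinv.continuous.tendsto _).mono_left nhdsWithin_le_nhds).mul hres using 2 with s
    · ring
    · rw [div_eq_inv_mul]
end

section
/- For every s ∈ ℂ with Re(s) > max(h, 0): the series Σ_n |Log(1 − e^{−s·l_n})| converges; in particular the family ((1 − e^{−s·l_n})^{−ε_n})_{n∈ℕ} is multipliable and ∏_n (1 − e^{−s·l_n})^{−ε_n} = exp(−Σ_n ε_n·Log(1 − e^{−s·l_n})). -/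
/-!
Pick `h < a < Re s`. By definition of the limsup, `N(T) ≤ e^{aT}` for large `T`. Grouping the
lengths into shells `⌈l_n⌉ = k`, the shell `k` contributes at most `N(k) e^{σ - σk} ≤ e^σ e^{(a-σ)k}`
to `∑ e^{-σ l_n}` (`σ = Re s`), a geometric series; hence `∑ ‖e^{-s l_n}‖ < ∞`. Then
`|Log(1 - z)| ≤ (3/2)|z|` for small `z` gives the absolute convergence of the logarithms, and since
`w^{-ε} = exp(-ε Log w)` the product is the exponential of a convergent series.
-/

open Topology Filter

lemma eventually_le_exp_mul_of_limsup_log_div_lt {N : ℝ → ℝ} {a : ℝ}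
    (hbdd : IsBoundedUnder (· ≤ ·) atTop fun T => Real.log (N T) / T)
    (ha : limsup (fun T => Real.log (N T) / T) atTop < a) :
    ∀ᶠ T in atTop, N T ≤ Real.exp (a * T) := by
  filter_upwards [eventually_lt_of_limsup_lt ha hbdd, eventually_gt_atTop 0] with T hT hT0
  calc N T ≤ Real.exp (Real.log (N T)) := Real.le_exp_log _
    _ ≤ Real.exp (a * T) := Real.exp_le_exp.2 ((div_lt_iff₀ hT0).1 hT).le

section Shells

variable {ι : Type*} {l : ι → ℝ} {σ : ℝ}

lemma setOf_natCeil_eq_subset (l : ι → ℝ) (k : ℕ) : {i | ⌈l i⌉₊ = k} ⊆ {i | l i ≤ k} :=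
  fun i (hi : ⌈l i⌉₊ = k) => hi ▸ Nat.le_ceil (l i)

lemma tsum_exp_neg_mul_natCeil_fiber_le (hl : ∀ i, 0 ≤ l i) (hσ : 0 ≤ σ) {k : ℕ}
    (hfin : {i | l i ≤ k}.Finite) :
    ∑' i : {i | ⌈l i⌉₊ = k}, Real.exp (-σ * l i)
      ≤ {i | l i ≤ k}.ncard * Real.exp (σ - σ * k) := by
  have := (hfin.subset (setOf_natCeil_eq_subset l k)).to_subtype
  have hterm : ∀ i : {i | ⌈l i⌉₊ = k}, Real.exp (-σ * l i) ≤ Real.exp (σ - σ * k) := by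
    rintro ⟨i, hi : ⌈l i⌉₊ = k⟩
    have : (k : ℝ) < l i + 1 := hi ▸ Nat.ceil_lt_add_one (hl i)
    exact Real.exp_le_exp.2 (by nlinarith)
  calc ∑' i : {i | ⌈l i⌉₊ = k}, Real.exp (-σ * l i)
      ≤ ∑' _ : {i | ⌈l i⌉₊ = k}, Real.exp (σ - σ * k) :=
        Summable.tsum_le_tsum hterm .of_finite .of_finite
    _ = {i | ⌈l i⌉₊ = k}.ncard * Real.exp (σ - σ * k) := by
        rw [tsum_const, nsmul_eq_mul, Nat.card_coe_set_eq]
    _ ≤ {i | l i ≤ k}.ncard * Real.exp (σ - σ * k) := by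
        gcongr ?_ * _
        exact_mod_cast Set.ncard_le_ncard (setOf_natCeil_eq_subset l k) hfin

theorem summable_exp_neg_mul_of_ncard_le_exp {a : ℝ} (hl : ∀ i, 0 ≤ l i)
    (hfin : ∀ T, {i | l i ≤ T}.Finite)
    (hN : ∀ᶠ T in atTop, ({i | l i ≤ T}.ncard : ℝ) ≤ Real.exp (a * T))
    (hσ : 0 ≤ σ) (haσ : a < σ) :
    Summable fun i => Real.exp (-σ * l i) := by
  refine (summable_partition (fun i => (Real.exp_pos _).le) (s := fun k : ℕ => {i | ⌈l i⌉₊ = k})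
    fun i => ⟨_, rfl, fun _ h => h.symm⟩).2 ⟨fun k => ?_, ?_⟩
  · have := ((hfin k).subset (setOf_natCeil_eq_subset l k)).to_subtype
    exact .of_finite
  · have hgeom : Summable fun k : ℕ => Real.exp σ * Real.exp (a - σ) ^ k :=
      (summable_geometric_of_lt_one (Real.exp_nonneg _)
        (Real.exp_lt_one_iff.2 (by linarith))).mul_left _
    refine hgeom.of_norm_bounded_eventually_nat ?_
    filter_upwards [tendsto_natCast_atTop_atTop.eventually hN] with k hk
    rw [Real.norm_of_nonneg (tsum_nonneg fun i => (Real.exp_pos _).le)]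
    calc _ ≤ {i | l i ≤ k}.ncard * Real.exp (σ - σ * k) :=
          tsum_exp_neg_mul_natCeil_fiber_le hl hσ (hfin k)
      _ ≤ Real.exp (a * k) * Real.exp (σ - σ * k) := by gcongr
      _ = Real.exp σ * Real.exp (a - σ) ^ k := by
          rw [← Real.exp_nat_mul, ← Real.exp_add, ← Real.exp_add]
          ring_nf

end Shells

lemma Complex.hasProd_cpow_neg {ι : Type*} {w c : ι → ℂ} {C : ℝ} (hw : ∀ i, w i ≠ 0)
    (hc : ∀ i, ‖c i‖ ≤ C) (hlog : Summable fun i => ‖Complex.log (w i)‖) :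
    HasProd (fun i => w i ^ (-c i)) (Complex.exp (-∑' i, c i * Complex.log (w i))) := by
  have hsum : Summable fun i => -(c i * Complex.log (w i)) :=
    .of_norm_bounded (hlog.mul_left C) fun i => by
      rw [norm_neg, norm_mul]
      exact mul_le_mul_of_nonneg_right (hc i) (norm_nonneg _)
  rw [← tsum_neg]
  refine hsum.hasSum.cexp.congr_fun fun i => ?_
  rw [Complex.cpow_def_of_ne_zero (hw i), Function.comp_apply, mul_neg, mul_comm]

/-- Absolute convergence of the dynamical zeta function
`ζ_F(s) = ∏_n (1 - e^(-s·l_n))^(-ε_n)` on the half-plane `Re s > max(h, 0)`, where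
`h` is the (finite) topological entropy `limsup_{T→∞} (1/T)·log N(T)`. -/
theorem dynamical_zeta_absolutely_convergent (l : ℕ → ℝ) (hl : ∀ n, 0 < l n)
    (ε : ℕ → ℤ) (hε : ∀ n, ε n = 1 ∨ ε n = -1)
    (hfin : ∀ T : ℝ, 0 < T → {n : ℕ | l n ≤ T}.Finite)
    (h : ℝ)
    (hbdd : IsBoundedUnder (· ≤ ·) atTop
      (fun T : ℝ => Real.log ({n : ℕ | l n ≤ T}.ncard : ℝ) / T))
    (hent : limsup (fun T : ℝ => Real.log ({n : ℕ | l n ≤ T}.ncard : ℝ) / T) atTop = h)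
    (s : ℂ) (hs : max h 0 < s.re) :
    Summable (fun n => ‖Complex.log (1 - Complex.exp (-s * l n))‖) ∧
    Multipliable (fun n => (1 - Complex.exp (-s * l n)) ^ (-(ε n : ℂ))) ∧
    ∏' n, (1 - Complex.exp (-s * l n)) ^ (-(ε n : ℂ))
      = Complex.exp (-∑' n, (ε n : ℂ) * Complex.log (1 - Complex.exp (-s * l n))) := by
  have hσ : 0 < s.re := (le_max_right h 0).trans_lt hs
  obtain ⟨a, hha, has⟩ := exists_between ((le_max_left h 0).trans_lt hs)
  have hsublevel (T : ℝ) : {n | l n ≤ T}.Finite :=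
    (hfin (max T 1) (by positivity)).subset fun n hn => hn.out.trans (le_max_left _ _)
  have hnorm (n : ℕ) : ‖Complex.exp (-s * l n)‖ = Real.exp (-s.re * l n) := by
    simp [Complex.norm_exp]
  have hsum : Summable fun n => Complex.exp (-s * l n) := by
    refine .of_norm ?_
    simpa only [hnorm] using summable_exp_neg_mul_of_ncard_le_exp (fun n => (hl n).le) hsublevel
      (eventually_le_exp_mul_of_limsup_log_div_lt hbdd (hent ▸ hha)) hσ.le has
  have hlog : Summable fun n => Complex.log (1 - Complex.exp (-s * l n)) := by
    simpa only [sub_eq_add_neg] using Complex.summable_log_one_add_of_summable hsum.neg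
  have hne (n : ℕ) : 1 - Complex.exp (-s * l n) ≠ 0 := by
    refine sub_ne_zero.2 fun h1 => ?_
    have : Real.exp (-s.re * l n) < 1 := Real.exp_lt_one_iff.2 (by nlinarith [hl n])
    rw [← hnorm, ← h1, norm_one] at this
    exact this.false
  have hprod := Complex.hasProd_cpow_neg (c := fun n => (ε n : ℂ)) (C := 1) hne
    (fun n => by rcases hε n with h1 | h1 <;> simp [h1]) hlog.norm
  exact ⟨hlog.norm, hprod.multipliable, hprod.tprod_eq⟩
end

section
/- For every s ∈ ℂ with Re(s) > max(h, 0): the double series Σ_n Σ_{k≥1} ε_n·l_n·e^{−k·l_n·s} converges absolutely, and the function F(s) := Σ_n ε_n·Log(1 − e^{−s·l_n}) is complex-differentiable at s with derivative F′(s) = Σ_n Σ_{k≥1} ε_n·l_n·e^{−k·l_n·s}. -/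
open Topology Filter

/-!
If `limsup_{T→∞} log N(T) / T < b` with `b ≥ 0`, then `N(T) ≤ C e^{bT}` for all `T ≥ 0`;
grouping the `l_n` by `⌈l_n⌉` turns this into convergence of `Σ_n e^{-a l_n}` for every
`a > max(h, 0)`, and `l e^{-σ l} ≤ (σ - a)⁻¹ e^{-a l}` upgrades it to `Σ_n l_n e^{-σ l_n} < ∞`
for `σ > max(h, 0)`.

Summing the geometric series in `k` reduces the double series to `Σ_n l_n q_n / (1 - q_n)` with
`q_n = e^{-l_n Re s} → 0`, which is dominated by `2 Σ_n l_n q_n`. On a half-plane `Re w > σ` with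
`max(h, 0) < σ < Re s`, the bound `‖Log(1 + z)‖ ≤ ‖z‖ / (1 - ‖z‖)` dominates the terms of `F`
by a summable sequence independent of `w`, so `F` may be differentiated termwise, and the
derivative `ε_n l_n e^{-s l_n} / (1 - e^{-s l_n})` of the `n`-th term is the sum of the `n`-th
row of the double series.
-/

lemma Monotone.exists_le_mul_exp_of_limsup_lt {N : ℝ → ℝ} (hN : Monotone N) {b : ℝ}
    (hbdd : IsBoundedUnder (· ≤ ·) atTop fun T => Real.log (N T) / T)
    (hlt : limsup (fun T => Real.log (N T) / T) atTop < b) (hb : 0 ≤ b) :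
    ∃ C, ∀ T, 0 ≤ T → N T ≤ C * Real.exp (b * T) := by
  obtain ⟨T₀, hT₀⟩ := eventually_atTop.1 (eventually_lt_of_limsup_lt hlt hbdd)
  set T₁ := max T₀ 1
  have hle_exp : ∀ T, T₁ ≤ T → N T ≤ Real.exp (b * T) := by
    intro T hT
    have hlog : Real.log (N T) < b * T := by
      have hT_pos : 0 < T := one_pos.trans_le ((le_max_right _ _).trans hT)
      simpa only [div_lt_iff₀ hT_pos] using hT₀ T ((le_max_left _ _).trans hT)
    rcases eq_or_ne (N T) 0 with h0 | h0
    · rw [h0]; positivity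
    · calc N T ≤ |N T| := le_abs_self _
        _ = Real.exp (Real.log (N T)) := by rw [← Real.log_abs, Real.exp_log (abs_pos.2 h0)]
        _ ≤ Real.exp (b * T) := (Real.exp_lt_exp.2 hlog).le
  refine ⟨max (N T₁) 1, fun T hT => ?_⟩
  rcases le_total T₁ T with hT₁ | hT₁
  · exact (hle_exp T hT₁).trans (le_mul_of_one_le_left (Real.exp_pos _).le (le_max_right _ _))
  · calc N T ≤ max (N T₁) 1 := (hN hT₁).trans (le_max_left _ _)
      _ ≤ max (N T₁) 1 * Real.exp (b * T) :=
        le_mul_of_one_le_right (by positivity) (Real.one_le_exp (mul_nonneg hb hT))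

lemma mul_exp_neg_mul_le {a σ : ℝ} (haσ : a < σ) (x : ℝ) :
    x * Real.exp (-(σ * x)) ≤ (σ - a)⁻¹ * Real.exp (-(a * x)) := by
  have hσa : 0 < σ - a := sub_pos.2 haσ
  have hsplit : Real.exp (-(σ * x)) = Real.exp (-((σ - a) * x)) * Real.exp (-(a * x)) := by
    rw [← Real.exp_add]; ring_nf
  have key : (σ - a) * (x * Real.exp (-(σ * x))) ≤ Real.exp (-(a * x)) :=
    calc (σ - a) * (x * Real.exp (-(σ * x)))
        = (σ - a) * x * Real.exp (-((σ - a) * x)) * Real.exp (-(a * x)) := by rw [hsplit]; ring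
      _ ≤ Real.exp ((σ - a) * x) * Real.exp (-((σ - a) * x)) * Real.exp (-(a * x)) := by
          gcongr; linarith [Real.add_one_le_exp ((σ - a) * x)]
      _ = Real.exp (-(a * x)) := by rw [← Real.exp_add, add_neg_cancel, Real.exp_zero, one_mul]
  rw [inv_mul_eq_div, le_div_iff₀ hσa]
  linarith

lemma hasSum_pow_succ {K : Type*} [NormedField K] [CompleteSpace K] {q : K} (hq : ‖q‖ < 1) :
    HasSum (fun k : ℕ => q ^ (k + 1)) (q / (1 - q)) := by
  simpa only [pow_succ', div_eq_mul_inv] using (hasSum_geometric_of_norm_lt_one hq).mul_left q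

lemma Complex.norm_log_one_add_le_div {z : ℂ} (hz : ‖z‖ < 1) :
    ‖Complex.log (1 + z)‖ ≤ ‖z‖ / (1 - ‖z‖) := by
  have h1 : 0 < 1 - ‖z‖ := sub_pos.2 hz
  refine (Complex.norm_log_one_add_le hz).trans ?_
  have hsq : ‖z‖ ^ 2 * (1 - ‖z‖)⁻¹ / 2 * (1 - ‖z‖) = ‖z‖ ^ 2 / 2 := by field_simp
  rw [le_div_iff₀ h1, add_mul, hsq]
  nlinarith [sq_nonneg ‖z‖]

lemma norm_cexp_neg_mul_ofReal (w : ℂ) (x : ℝ) :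
    ‖Complex.exp (-w * x)‖ = Real.exp (-(w.re * x)) := by
  rw [Complex.norm_exp]; simp

lemma norm_cexp_neg_mul_ofReal_lt_one {w : ℂ} (hw : 0 < w.re) {x : ℝ} (hx : 0 < x) :
    ‖Complex.exp (-w * x)‖ < 1 := by
  rw [norm_cexp_neg_mul_ofReal, Real.exp_lt_one_iff, neg_lt_zero]
  positivity

lemma cexp_neg_succ_mul_eq_pow (s : ℂ) (x : ℝ) (k : ℕ) :
    Complex.exp (-(((k + 1 : ℕ) : ℂ) * x) * s) = Complex.exp (-s * x) ^ (k + 1) := by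
  rw [← Complex.exp_nat_mul]; ring_nf

lemma hasSum_cexp_neg_succ_mul {s : ℂ} (hs : 0 < s.re) {x : ℝ} (hx : 0 < x) :
    HasSum (fun k : ℕ => Complex.exp (-(((k + 1 : ℕ) : ℂ) * x) * s))
      (Complex.exp (-s * x) / (1 - Complex.exp (-s * x))) := by
  simpa only [cexp_neg_succ_mul_eq_pow] using
    hasSum_pow_succ (norm_cexp_neg_mul_ofReal_lt_one hs hx)

lemma hasDerivAt_log_one_sub_cexp_neg_mul {w : ℂ} (hw : 0 < w.re) {x : ℝ} (hx : 0 < x) :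
    HasDerivAt (fun z : ℂ => Complex.log (1 - Complex.exp (-z * x)))
      (x * (Complex.exp (-w * x) / (1 - Complex.exp (-w * x)))) w := by
  have hmem : 1 - Complex.exp (-w * x) ∈ Complex.slitPlane := by
    simpa [sub_eq_add_neg] using Complex.mem_slitPlane_of_norm_lt_one
      (z := -Complex.exp (-w * x)) (by simpa using norm_cexp_neg_mul_ofReal_lt_one hw hx)
  have hinner : HasDerivAt (fun z : ℂ => 1 - Complex.exp (-z * x))
      (x * Complex.exp (-w * x)) w := by
    have hlin : HasDerivAt (fun z : ℂ => -z * x) (-x) w := by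
      simpa using (hasDerivAt_neg w).mul_const (x : ℂ)
    exact (hlin.cexp.const_sub 1).congr_deriv (by ring)
  exact (hinner.clog hmem).congr_deriv (by ring)

section

variable {ι : Type*} {l : ι → ℝ}

lemma monotone_ncard_setOf_le (hfin : ∀ T, {i | l i ≤ T}.Finite) :
    Monotone fun T => ({i | l i ≤ T}.ncard : ℝ) := fun _ T hST =>
  Nat.cast_le.2 (Set.ncard_le_ncard (fun _ hi => le_trans hi hST) (hfin T))

lemma tendsto_cofinite_atTop_of_finite_setOf_le (hfin : ∀ T, {i | l i ≤ T}.Finite) :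
    Tendsto l cofinite atTop :=
  tendsto_atTop.2 fun T => (hfin T).eventually_cofinite_notMem.mono fun _ hi => (not_le.1 hi).le

open Finset in
lemma summable_exp_neg_mul_of_ncard_le (hl : ∀ i, 0 ≤ l i) (hfin : ∀ T, {i | l i ≤ T}.Finite)
    {C b a : ℝ} (hC : ∀ T, 0 ≤ T → ({i | l i ≤ T}.ncard : ℝ) ≤ C * Real.exp (b * T))
    (hb : 0 ≤ b) (hba : b < a) :
    Summable fun i => Real.exp (-(a * l i)) := by
  classical
  have hC0 : 0 ≤ C := by simpa using (Nat.cast_nonneg _).trans (hC 0 le_rfl)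
  set r := Real.exp (b - a)
  have hr0 : 0 ≤ r := (Real.exp_pos _).le
  have hr1 : r < 1 := Real.exp_lt_one_iff.2 (sub_neg.2 hba)
  have hterm : ∀ i, Real.exp (-(a * l i)) ≤ Real.exp a * Real.exp (-(a * ⌈l i⌉₊)) := fun i => by
    rw [← Real.exp_add, Real.exp_le_exp]
    nlinarith [Nat.ceil_lt_add_one (hl i)]
  have hfiber : ∀ (F : Finset ι) (m : ℕ), (#{i ∈ F | ⌈l i⌉₊ = m} : ℝ) ≤ C * Real.exp (b * m) :=
    fun F m => by
      refine le_trans ?_ (hC m m.cast_nonneg)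
      rw [Set.ncard_eq_toFinset_card _ (hfin m)]
      refine Nat.cast_le.2 (card_le_card fun i hi => ?_)
      rw [Set.Finite.mem_toFinset, Set.mem_ofPred_eq, ← (mem_filter.1 hi).2]
      exact Nat.le_ceil _
  refine summable_of_sum_le (c := C * Real.exp a * ∑' m : ℕ, r ^ m)
    (fun _ => (Real.exp_pos _).le) fun F => ?_
  calc ∑ i ∈ F, Real.exp (-(a * l i))
      ≤ ∑ i ∈ F, Real.exp a * Real.exp (-(a * ⌈l i⌉₊)) := sum_le_sum fun i _ => hterm i
    _ = ∑ m ∈ F.image (⌈l ·⌉₊), #{i ∈ F | ⌈l i⌉₊ = m} • (Real.exp a * Real.exp (-(a * m))) :=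
        sum_comp (fun m : ℕ => Real.exp a * Real.exp (-(a * m))) _
    _ ≤ ∑ m ∈ F.image (⌈l ·⌉₊), C * Real.exp a * r ^ m := sum_le_sum fun m _ => by
        rw [nsmul_eq_mul]
        calc _ ≤ C * Real.exp (b * m) * (Real.exp a * Real.exp (-(a * m))) := by
              gcongr; exact hfiber F m
          _ = _ := by simp only [r, ← Real.exp_nat_mul, mul_assoc, ← Real.exp_add]; ring_nf
    _ ≤ C * Real.exp a * ∑' m : ℕ, r ^ m := by
        rw [← mul_sum]
        gcongr
        exact (summable_geometric_of_lt_one hr0 hr1).sum_le_tsum _ fun m _ => pow_nonneg hr0 m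

lemma summable_exp_neg_mul_of_limsup_lt (hl : ∀ i, 0 ≤ l i) (hfin : ∀ T, {i | l i ≤ T}.Finite)
    (hbdd : IsBoundedUnder (· ≤ ·) atTop
      fun T : ℝ => Real.log ({i | l i ≤ T}.ncard : ℝ) / T)
    {a : ℝ} (ha : max (limsup (fun T : ℝ => Real.log ({i | l i ≤ T}.ncard : ℝ) / T) atTop) 0 < a) :
    Summable fun i => Real.exp (-(a * l i)) := by
  obtain ⟨b, hb, hba⟩ := exists_between ha
  obtain ⟨C, hC⟩ := (monotone_ncard_setOf_le hfin).exists_le_mul_exp_of_limsup_lt hbdd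
    ((le_max_left _ _).trans_lt hb) ((le_max_right _ _).trans hb.le)
  exact summable_exp_neg_mul_of_ncard_le hl hfin hC ((le_max_right _ _).trans hb.le) hba

lemma Summable.mul_exp_neg_mul_of_lt {a σ : ℝ} (haσ : a < σ) (hl : ∀ i, 0 ≤ l i)
    (hsum : Summable fun i => Real.exp (-(a * l i))) :
    Summable fun i => l i * Real.exp (-(σ * l i)) :=
  (hsum.mul_left (σ - a)⁻¹).of_nonneg_of_le (fun i => by have := hl i; positivity)
    fun i => mul_exp_neg_mul_le haσ (l i)

lemma summable_mul_div_one_sub {c q : ι → ℝ} (hc : 0 ≤ c) (hq : 0 ≤ q)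
    (hq_lim : Tendsto q cofinite (𝓝 0)) (hsum : Summable fun i => c i * q i) :
    Summable fun i => c i * q i / (1 - q i) := by
  refine (hsum.mul_left 2).of_norm_bounded_eventually ?_
  filter_upwards [hq_lim (Iic_mem_nhds one_half_pos)] with i hi
  have hi : q i ≤ 1 / 2 := hi
  have h1 : 0 < 1 - q i := by linarith
  rw [Real.norm_of_nonneg (div_nonneg (mul_nonneg (hc i) (hq i)) h1.le), div_le_iff₀ h1]
  nlinarith [mul_nonneg (hc i) (hq i)]

lemma tendsto_exp_neg_mul_cofinite (htend : Tendsto l cofinite atTop) {σ : ℝ} (hσ : 0 < σ) :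
    Tendsto (fun i => Real.exp (-(σ * l i))) cofinite (𝓝 0) :=
  Real.tendsto_exp_atBot.comp (tendsto_neg_atTop_atBot.comp (htend.const_mul_atTop hσ))

lemma summable_norm_mul_cexp_neg_succ_mul (hl : ∀ i, 0 < l i) (htend : Tendsto l cofinite atTop)
    {c : ι → ℂ} (hc : ∀ i, ‖c i‖ ≤ 1) {s : ℂ} (hs : 0 < s.re)
    (hsum : Summable fun i => l i * Real.exp (-(s.re * l i))) :
    Summable fun p : ι × ℕ =>
      ‖c p.1 * l p.1 * Complex.exp (-(((p.2 + 1 : ℕ) : ℂ) * l p.1) * s)‖ := by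
  set q := fun i => Real.exp (-(s.re * l i))
  have hq1 : ∀ i, ‖q i‖ < 1 := fun i => by
    rw [Real.norm_of_nonneg (Real.exp_pos _).le]
    exact Real.exp_lt_one_iff.2 (neg_lt_zero.2 (mul_pos hs (hl i)))
  have hrow : ∀ i, HasSum (fun k : ℕ => l i * q i ^ (k + 1)) (l i * (q i / (1 - q i))) :=
    fun i => (hasSum_pow_succ (hq1 i)).mul_left (l i)
  have hdouble : Summable fun p : ι × ℕ => l p.1 * q p.1 ^ (p.2 + 1) := by
    refine (summable_prod_of_nonneg fun p => ?_).2 ⟨fun i => (hrow i).summable, ?_⟩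
    · exact mul_nonneg (hl p.1).le (pow_nonneg (Real.exp_pos _).le _)
    · simp only [(hrow _).tsum_eq, ← mul_div_assoc]
      exact summable_mul_div_one_sub (fun i => (hl i).le) (fun i => (Real.exp_pos _).le)
        (tendsto_exp_neg_mul_cofinite htend hs) hsum
  refine hdouble.of_nonneg_of_le (fun _ => norm_nonneg _) fun ⟨i, k⟩ => ?_
  dsimp only
  rw [norm_mul, norm_mul, Complex.norm_real, Real.norm_of_nonneg (hl i).le,
    cexp_neg_succ_mul_eq_pow, norm_pow, norm_cexp_neg_mul_ofReal, mul_assoc]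
  exact mul_le_of_le_one_left (mul_nonneg (hl i).le (by positivity)) (hc i)

lemma hasDerivAt_tsum_mul_log_one_sub_cexp (hl : ∀ i, 0 < l i)
    (htend : Tendsto l cofinite atTop) {c : ι → ℂ} (hc : ∀ i, ‖c i‖ ≤ 1) {σ : ℝ} (hσ : 0 < σ)
    (hsum : Summable fun i => Real.exp (-(σ * l i))) {s : ℂ} (hσs : σ < s.re) :
    HasDerivAt (fun w : ℂ => ∑' i, c i * Complex.log (1 - Complex.exp (-w * l i)))
      (∑' i, c i * l i * (Complex.exp (-s * l i) / (1 - Complex.exp (-s * l i)))) s := by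
  set U := {w : ℂ | σ < w.re}
  have hU : IsOpen U := isOpen_lt continuous_const Complex.continuous_re
  set q := fun i => Real.exp (-(σ * l i))
  have hderiv : ∀ i, ∀ w ∈ U,
      HasDerivAt (fun z : ℂ => c i * Complex.log (1 - Complex.exp (-z * l i)))
        (c i * l i * (Complex.exp (-w * l i) / (1 - Complex.exp (-w * l i)))) w := fun i w hw => by
    simpa only [mul_assoc] using
      (hasDerivAt_log_one_sub_cexp_neg_mul (hσ.trans hw) (hl i)).const_mul (c i)
  have hbound : ∀ i, ∀ w ∈ U,
      ‖c i * Complex.log (1 - Complex.exp (-w * l i))‖ ≤ q i / (1 - q i) := by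
    intro i w hw
    have he : ‖Complex.exp (-w * l i)‖ ≤ q i := by
      rw [norm_cexp_neg_mul_ofReal]
      exact Real.exp_le_exp.2 (by nlinarith [hl i, show σ < w.re from hw])
    have hq1 : q i < 1 := Real.exp_lt_one_iff.2 (neg_lt_zero.2 (mul_pos hσ (hl i)))
    calc ‖c i * Complex.log (1 - Complex.exp (-w * l i))‖
        ≤ ‖Complex.log (1 + -Complex.exp (-w * l i))‖ := by
          rw [norm_mul, sub_eq_add_neg]; exact mul_le_of_le_one_left (norm_nonneg _) (hc i)
      _ ≤ ‖Complex.exp (-w * l i)‖ / (1 - ‖Complex.exp (-w * l i)‖) := by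
          simpa using Complex.norm_log_one_add_le_div (z := -Complex.exp (-w * l i))
            (by rw [norm_neg]; exact he.trans_lt hq1)
      _ ≤ q i / (1 - q i) := by gcongr
  have hu : Summable fun i => q i / (1 - q i) := by
    simpa only [one_mul] using summable_mul_div_one_sub (c := fun _ => 1) (fun _ => zero_le_one)
      (fun _ => (Real.exp_pos _).le) (tendsto_exp_neg_mul_cofinite htend hσ)
      (by simpa only [one_mul] using hsum)
  have hdiff : ∀ i,
      DifferentiableOn ℂ (fun z : ℂ => c i * Complex.log (1 - Complex.exp (-z * l i))) U :=
    fun i w hw => (hderiv i w hw).differentiableAt.differentiableWithinAt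
  have hs : s ∈ U := hσs
  have hsum_deriv := Complex.hasSum_deriv_of_summable_norm hu hdiff hU hbound hs
  rw [show (fun i => deriv _ s) = _ from funext fun i => (hderiv i s hs).deriv] at hsum_deriv
  rw [hsum_deriv.tsum_eq]
  exact ((Complex.differentiableOn_tsum_of_summable_norm hu hdiff hU hbound).differentiableAt
    (hU.mem_nhds hs)).hasDerivAt

end

/-- Logarithmic derivative of the dynamical zeta function: for `Re s > max(h, 0)` the
double series `Σ_n Σ_{k≥1} ε_n·l_n·e^(-k·l_n·s)` converges absolutely and
`F(s) = Σ_n ε_n·Log(1 - e^(-s·l_n))` is complex-differentiable at `s` with this derivative. -/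
theorem dynamical_zeta_log_deriv (l : ℕ → ℝ) (hl : ∀ n, 0 < l n)
    (ε : ℕ → ℤ) (hε : ∀ n, ε n = 1 ∨ ε n = -1)
    (hfin : ∀ T : ℝ, 0 < T → {n : ℕ | l n ≤ T}.Finite)
    (h : ℝ)
    (hbdd : IsBoundedUnder (· ≤ ·) atTop
      (fun T : ℝ => Real.log ({n : ℕ | l n ≤ T}.ncard : ℝ) / T))
    (hent : limsup (fun T : ℝ => Real.log ({n : ℕ | l n ≤ T}.ncard : ℝ) / T) atTop = h)
    (s : ℂ) (hs : max h 0 < s.re) :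
    Summable (fun p : ℕ × ℕ =>
      ‖(ε p.1 : ℂ) * l p.1 * Complex.exp (-(((p.2 + 1 : ℕ) : ℂ) * l p.1) * s)‖) ∧
    HasDerivAt (fun w : ℂ => ∑' n, (ε n : ℂ) * Complex.log (1 - Complex.exp (-w * l n)))
      (∑' p : ℕ × ℕ, (ε p.1 : ℂ) * l p.1 * Complex.exp (-(((p.2 + 1 : ℕ) : ℂ) * l p.1) * s))
      s := by
  have hfin' : ∀ T, {n | l n ≤ T}.Finite := fun T =>
    (hfin (max T 1) (one_pos.trans_le (le_max_right _ _))).subset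
      fun _ hn => le_trans (Set.mem_ofPred.1 hn) (le_max_left _ _)
  have hexp : ∀ a, max h 0 < a → Summable fun n => Real.exp (-(a * l n)) := fun a ha =>
    summable_exp_neg_mul_of_limsup_lt (fun n => (hl n).le) hfin' hbdd (by rwa [hent])
  have htend := tendsto_cofinite_atTop_of_finite_setOf_le hfin'
  have hε_norm : ∀ n, ‖(ε n : ℂ)‖ ≤ 1 := fun n => by rcases hε n with h1 | h1 <;> simp [h1]
  obtain ⟨a, ha, has⟩ := exists_between hs
  have ha0 : 0 < a := (le_max_right _ _).trans_lt ha
  have hnorm := summable_norm_mul_cexp_neg_succ_mul hl htend hε_norm (ha0.trans has)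
    ((hexp a ha).mul_exp_neg_mul_of_lt has fun n => (hl n).le)
  refine ⟨hnorm, ?_⟩
  have hrows := hnorm.of_norm.hasSum.prod_fiberwise fun n =>
    (hasSum_cexp_neg_succ_mul (ha0.trans has) (hl n)).mul_left ((ε n : ℂ) * l n)
  rw [← hrows.tsum_eq]
  exact hasDerivAt_tsum_mul_log_one_sub_cexp hl htend hε_norm ha0 (hexp a ha) has
end
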